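/- Let O₁ and O₂ be nonempty sets and O = O₁ × O₂, with preorders ≽₁ on Δ(O₁), ≽₂ on Δ(O₂), and a preorder ≽ on Δ(O). Suppose there are α, β ∈ (0,1) and, for each i ∈ {1,2}, elements aᵢ, bᵢ, cᵢ, dᵢ ∈ Oᵢ with δ_{aᵢ} ≻ᵢ δ_{bᵢ} ≻ᵢ δ_{cᵢ} ≻ᵢ δ_{dᵢ}, such that δ_{a₁} α δ_{d₁} ∼₁ δ_{b₁}, δ_{c₁} ≽₁ δ_{b₁} (β/(β+(1−α))) δ_{d₁}, δ_{a₂} β δ_{d₂} ∼₂ δ_{b₂}, and δ_{c₂} ≽₂ δ_{b₂} (α/(α+(1−β))) δ_{d₂}. Then ≽ cannot simultaneously satisfy Pareto, Converse Pareto, Independence, Unidimensional Dimensional Separability, and Negative Dominance. -/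

import Mathlib

open scoped BigOperators

noncomputable section

/-- A finite-support lottery on `X`. -/
structure Lottery (X : Type*) where
  val : X →₀ ℝ
  nonneg : ∀ x, 0 ≤ val x
  total : val.sum (fun _ p => p) = 1

namespace Lottery

variable {X : Type*}

/-- The point-mass lottery at `x`. -/
def delta (x : X) : Lottery X where
  val := Finsupp.single x 1
  nonneg := fun y => by
    classical
    rw [Finsupp.single_apply]
    split <;> norm_num
  total := by
    rw [Finsupp.sum_single_index rfl]

/-- The mixture `α • f + (1 - α) • g`. -/
def mix (α : ℝ) (h1 : 0 ≤ α) (h2 : α ≤ 1) (f g : Lottery X) : Lottery X where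
  val := α • f.val + (1 - α) • g.val
  nonneg := fun x => by
    have hf := f.nonneg x
    have hg := g.nonneg x
    simp only [Finsupp.coe_add, Finsupp.coe_smul, Pi.add_apply, Pi.smul_apply, smul_eq_mul]
    nlinarith
  total := by
    rw [Finsupp.sum_add_index' (fun _ => rfl) (fun _ _ _ => rfl)]
    rw [Finsupp.sum_smul_index (fun _ => rfl), Finsupp.sum_smul_index (fun _ => rfl)]
    rw [← Finsupp.mul_sum, ← Finsupp.mul_sum, f.total, g.total]
    ring

/-- The uniform lottery on `a` and `b`, written `a/b` in the paper. -/
def unif (a b : X) : Lottery X := mix (1/2) (by norm_num) (by norm_num) (delta a) (delta b)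

/-- Strict preference. -/
def SPref (R : Lottery X → Lottery X → Prop) (f g : Lottery X) : Prop := R f g ∧ ¬ R g f

/-- Indifference. -/
def Indiff (R : Lottery X → Lottery X → Prop) (f g : Lottery X) : Prop := R f g ∧ R g f

/-- Incomparability. -/
def Incomp (R : Lottery X → Lottery X → Prop) (f g : Lottery X) : Prop := ¬ R f g ∧ ¬ R g f

/-- Negative Dominance. -/
def NegDominance (R : Lottery X → Lottery X → Prop) : Prop :=
  ∀ f g : Lottery X, SPref R f g →
    ∃ o ∈ f.val.support, ∃ o' ∈ g.val.support, SPref R (delta o) (delta o')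

/-- Independence. -/
def Independence (R : Lottery X → Lottery X → Prop) : Prop :=
  ∀ f g h : Lottery X, ∀ α : ℝ, ∀ (h1 : 0 < α) (h2 : α < 1),
    (R f g ↔ R (mix α h1.le h2.le f h) (mix α h1.le h2.le g h))

/-- The coordinatewise expectation of a lottery on `ℝ²`. -/
def expLot (f : Lottery (ℝ × ℝ)) : ℝ × ℝ :=
  (f.val.sum fun o p => p * o.1, f.val.sum fun o p => p * o.2)

/-- Pareto. -/
def Pareto (R : Lottery (ℝ × ℝ) → Lottery (ℝ × ℝ) → Prop) : Prop :=
  ∀ x y x' y' : ℝ, x' ≤ x → y' ≤ y → R (delta (x, y)) (delta (x', y'))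

/-- Converse Pareto. -/
def ConvPareto (R : Lottery (ℝ × ℝ) → Lottery (ℝ × ℝ) → Prop) : Prop :=
  ∀ x y x' y' : ℝ, R (delta (x, y)) (delta (x', y')) → x' ≤ x ∧ y' ≤ y

/-- Two outcomes are unidimensional with each other if they differ in at most one coordinate. -/
def UniWith {A B : Type*} (o o' : A × B) : Prop := o.1 = o'.1 ∨ o.2 = o'.2

/-- A lottery is unidimensional if any two outcomes in its support are unidimensional
with each other. -/
def Unidim {A B : Type*} (f : Lottery (A × B)) : Prop :=
  ∀ o ∈ f.val.support, ∀ o' ∈ f.val.support, UniWith o o'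

/-- Expectationalism. -/
def Expectationalism (R : Lottery (ℝ × ℝ) → Lottery (ℝ × ℝ) → Prop) : Prop :=
  ∀ f, Indiff R f (delta (expLot f))

/-- Unidimensional Expectations. -/
def UnidimExp (R : Lottery (ℝ × ℝ) → Lottery (ℝ × ℝ) → Prop) : Prop :=
  ∀ f, Unidim f → Indiff R f (delta (expLot f))

end Lottery

open Lottery

/-- Qualitative Pareto. -/
def QPareto {O₁ O₂ : Type*} (R1 : Lottery O₁ → Lottery O₁ → Prop)
    (R2 : Lottery O₂ → Lottery O₂ → Prop)
    (R : Lottery (O₁ × O₂) → Lottery (O₁ × O₂) → Prop) : Prop :=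
  ∀ o₁ o₁' : O₁, ∀ o₂ o₂' : O₂,
    R1 (delta o₁) (delta o₁') → R2 (delta o₂) (delta o₂') →
      R (delta (o₁, o₂)) (delta (o₁', o₂'))

/-- Qualitative Converse Pareto. -/
def QConvPareto {O₁ O₂ : Type*} (R1 : Lottery O₁ → Lottery O₁ → Prop)
    (R2 : Lottery O₂ → Lottery O₂ → Prop)
    (R : Lottery (O₁ × O₂) → Lottery (O₁ × O₂) → Prop) : Prop :=
  ∀ o₁ o₁' : O₁, ∀ o₂ o₂' : O₂,
    R (delta (o₁, o₂)) (delta (o₁', o₂')) →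
      R1 (delta o₁) (delta o₁') ∧ R2 (delta o₂) (delta o₂')

/-- The embedding `o₁ ↦ (o₁, o₂)`. -/
def fixSnd {O₁ O₂ : Type*} (o₂ : O₂) : O₁ ↪ O₁ × O₂ :=
  ⟨fun o₁ => (o₁, o₂), fun a b h => by simpa using congrArg Prod.fst h⟩

/-- The embedding `o₂ ↦ (o₁, o₂)`. -/
def fixFst {O₁ O₂ : Type*} (o₁ : O₁) : O₂ ↪ O₁ × O₂ :=
  ⟨fun o₂ => (o₁, o₂), fun a b h => by simpa using congrArg Prod.snd h⟩

/-- The lottery `(f₁, o₂)` on `O₁ × O₂` obtained from a lottery on `O₁`. -/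
noncomputable def embed1 {O₁ O₂ : Type*} (f : Lottery O₁) (o₂ : O₂) : Lottery (O₁ × O₂) where
  val := f.val.embDomain (fixSnd o₂)
  nonneg := fun x => by
    rcases em (x ∈ Set.range (fixSnd (O₁ := O₁) o₂)) with ⟨a, rfl⟩ | hx
    · rw [Finsupp.embDomain_apply_self]; exact f.nonneg a
    · rw [Finsupp.embDomain_of_notMem_range _ _ _ hx]
  total := by
    rw [Finsupp.sum_embDomain]
    exact f.total

/-- The lottery `(f₂, o₁)` on `O₁ × O₂` obtained from a lottery on `O₂`. -/
noncomputable def embed2 {O₁ O₂ : Type*} (f : Lottery O₂) (o₁ : O₁) : Lottery (O₁ × O₂) where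
  val := f.val.embDomain (fixFst o₁)
  nonneg := fun x => by
    rcases em (x ∈ Set.range (fixFst (O₂ := O₂) o₁)) with ⟨a, rfl⟩ | hx
    · rw [Finsupp.embDomain_apply_self]; exact f.nonneg a
    · rw [Finsupp.embDomain_of_notMem_range _ _ _ hx]
  total := by
    rw [Finsupp.sum_embDomain]
    exact f.total

/-- Unidimensional Dimensional Separability. -/
def UnidimDimSep {O₁ O₂ : Type*} (R1 : Lottery O₁ → Lottery O₁ → Prop)
    (R2 : Lottery O₂ → Lottery O₂ → Prop)
    (R : Lottery (O₁ × O₂) → Lottery (O₁ × O₂) → Prop) : Prop :=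
  (∀ f₁ g₁ : Lottery O₁, R1 f₁ g₁ ↔ ∀ o₂ : O₂, R (embed1 f₁ o₂) (embed1 g₁ o₂)) ∧
  (∀ f₂ g₂ : Lottery O₂, R2 f₂ g₂ ↔ ∀ o₁ : O₁, R (embed2 f₂ o₁) (embed2 g₂ o₁))

/-!
Suppose all five axioms hold, and say α ≤ β (otherwise exchange the two dimensions). Write `xy`
for the outcome `(x₁, y₂)` and `D = (α + 1 - β) + β (β + 1 - α)`. Separability transfers the
hypotheses on each dimension to lotteries on `O`, where Independence lets us substitute them
inside mixtures:
`X = ((α + 1 - β)·ac + β (β + 1 - α)·ca) / D ≽ ((1 - β)(1 + α)·ad + β (1 + β)·ba) / D`.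
Pareto gives `ad ≽ bd`, strictly by Converse Pareto, so `X` is strictly better than
`((1 - β)(1 + α)·bd + β (1 + β)·ba) / D`, which, as `β ≥ α`, is a mixture of
`β·ba + (1 - β)·bd ∼ bb` and `ba ≽ bb`, hence `≽ bb`. Thus `X ≻ bb`, while by Converse Pareto
neither `ac` nor `ca` is weakly better than `bb`: Negative Dominance fails.
-/

namespace Lottery

variable {X : Type*}

theorem ext {f g : Lottery X} (h : f.val = g.val) : f = g := by
  cases f; cases g; cases h; rfl

@[simp] lemma delta_val (x : X) : (delta x).val = Finsupp.single x 1 := rfl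

@[simp] lemma mix_val (μ : ℝ) (h0 : 0 ≤ μ) (h1 : μ ≤ 1) (f g : Lottery X) :
    (mix μ h0 h1 f g).val = μ • f.val + (1 - μ) • g.val := rfl

lemma mix_comm (μ : ℝ) (h0 : 0 ≤ μ) (h1 : μ ≤ 1) (f g : Lottery X) :
    mix μ h0 h1 f g = mix (1 - μ) (sub_nonneg.2 h1) (sub_le_self 1 h0) g f :=
  ext <| by rw [mix_val, mix_val, sub_sub_cancel, add_comm]

lemma mix_self (μ : ℝ) (h0 : 0 ≤ μ) (h1 : μ ≤ 1) (f : Lottery X) : mix μ h0 h1 f f = f :=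
  ext <| by rw [mix_val, ← add_smul, add_sub_cancel, one_smul]

lemma mix_zero (h0 : (0 : ℝ) ≤ 0) (h1 : (0 : ℝ) ≤ 1) (f g : Lottery X) : mix 0 h0 h1 f g = g :=
  ext <| by rw [mix_val, zero_smul, zero_add, sub_zero, one_smul]

lemma mix_one (h0 : (0 : ℝ) ≤ 1) (h1 : (1 : ℝ) ≤ 1) (f g : Lottery X) : mix 1 h0 h1 f g = f :=
  ext <| by rw [mix_val, sub_self, zero_smul, add_zero, one_smul]

lemma mem_support_mix_delta {μ : ℝ} {h0 : 0 ≤ μ} {h1 : μ ≤ 1} {x y o : X}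
    (ho : o ∈ (mix μ h0 h1 (delta x) (delta y)).val.support) : o = x ∨ o = y := by
  classical
  rcases Finset.mem_union.1 (Finsupp.support_add ho) with h | h
  · exact .inl (Finset.mem_singleton.1 (Finsupp.support_single_subset (Finsupp.support_smul h)))
  · exact .inr (Finset.mem_singleton.1 (Finsupp.support_single_subset (Finsupp.support_smul h)))

section Independence

variable {R : Lottery X → Lottery X → Prop}

lemma Independence.mix_right [Std.Refl R] (hInd : Independence R) {f g : Lottery X} (hfg : R f g)
    (μ : ℝ) (h0 : 0 ≤ μ) (h1 : μ ≤ 1) (h : Lottery X) :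
    R (mix μ h0 h1 f h) (mix μ h0 h1 g h) := by
  rcases h0.eq_or_lt with rfl | h0
  · simpa only [mix_zero] using refl_of R h
  rcases h1.eq_or_lt with rfl | h1
  · simpa only [mix_one] using hfg
  exact (hInd f g h μ h0 h1).1 hfg

lemma Independence.mix_left [Std.Refl R] (hInd : Independence R) {f g : Lottery X} (hfg : R f g)
    (μ : ℝ) (h0 : 0 ≤ μ) (h1 : μ ≤ 1) (h : Lottery X) :
    R (mix μ h0 h1 h f) (mix μ h0 h1 h g) := by
  rw [mix_comm μ h0 h1 h f, mix_comm μ h0 h1 h g]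
  exact hInd.mix_right hfg _ _ _ _

lemma Independence.mix_mono [IsPreorder (Lottery X) R] (hInd : Independence R)
    {f f' g g' : Lottery X} (hf : R f f') (hg : R g g') (μ : ℝ) (h0 : 0 ≤ μ) (h1 : μ ≤ 1) :
    R (mix μ h0 h1 f g) (mix μ h0 h1 f' g') :=
  trans_of R (hInd.mix_right hf _ _ _ _) (hInd.mix_left hg _ _ _ _)

lemma Independence.mix_rel_of_rel [IsPreorder (Lottery X) R] (hInd : Independence R)
    {f g h : Lottery X} (hf : R f h) (hg : R g h) (μ : ℝ) (h0 : 0 ≤ μ) (h1 : μ ≤ 1) :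
    R (mix μ h0 h1 f g) h := by
  simpa only [mix_self] using hInd.mix_mono hf hg μ h0 h1

lemma Independence.sPref_mix_right (hInd : Independence R) {f g : Lottery X} (hfg : SPref R f g)
    (μ : ℝ) (h0 : 0 < μ) (h1 : μ < 1) (h : Lottery X) :
    SPref R (mix μ h0.le h1.le f h) (mix μ h0.le h1.le g h) :=
  ⟨(hInd f g h μ h0 h1).1 hfg.1, fun hgf => hfg.2 ((hInd g f h μ h0 h1).2 hgf)⟩

lemma sPref_of_rel_of_sPref_of_rel [IsTrans (Lottery X) R] {f g g' h : Lottery X} (hfg : R f g)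
    (hg : SPref R g g') (hg'h : R g' h) : SPref R f h :=
  ⟨trans_of R hfg (trans_of R hg.1 hg'h), fun hhf => hg.2 (trans_of R hg'h (trans_of R hhf hfg))⟩

lemma NegDominance.sPref_delta_of_sPref_mix (hND : NegDominance R) {μ : ℝ} {h0 : 0 ≤ μ}
    {h1 : μ ≤ 1} {x y z : X} (h : SPref R (mix μ h0 h1 (delta x) (delta y)) (delta z)) :
    SPref R (delta x) (delta z) ∨ SPref R (delta y) (delta z) := by
  obtain ⟨o, ho, o', ho', hoo'⟩ := hND _ _ h
  obtain rfl : o' = z := Finset.mem_singleton.1 (Finsupp.support_single_subset ho')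
  rcases mem_support_mix_delta ho with rfl | rfl
  exacts [.inl hoo', .inr hoo']

end Independence

section Chain

variable {R : Lottery X → Lottery X → Prop} {α β : ℝ} {aa ab ad ba da ac ca bd bb : X}

lemma Independence.rel_mix_ac_ca [IsPreorder (Lottery X) R] (hInd : Independence R)
    (hα0 : 0 < α) (hα1 : α < 1) (hβ0 : 0 < β) (hβ1 : β < 1)
    (hac : R (delta ac) (mix (α / (α + (1 - β))) (div_nonneg hα0.le (by linarith))
      (by rw [div_le_one (by linarith)]; linarith) (delta ab) (delta ad)))
    (hca : R (delta ca) (mix (β / (β + (1 - α))) (div_nonneg hβ0.le (by linarith))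
      (by rw [div_le_one (by linarith)]; linarith) (delta ba) (delta da)))
    (hab : R (delta ab) (mix β hβ0.le hβ1.le (delta aa) (delta ad)))
    (hba : R (mix α hα0.le hα1.le (delta aa) (delta da)) (delta ba)) :
    R (mix ((α + (1 - β)) / (α + (1 - β) + β * (β + (1 - α))))
        (div_nonneg (by linarith) (by nlinarith)) (div_le_one_of_le₀ (by nlinarith) (by nlinarith))
        (delta ac) (delta ca))
      (mix ((1 - β) * (1 + α) / (α + (1 - β) + β * (β + (1 - α))))
        (div_nonneg (by nlinarith) (by nlinarith)) (div_le_one_of_le₀ (by nlinarith) (by nlinarith))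
        (delta ad) (delta ba)) := by
  have h₁ : α + (1 - β) ≠ 0 := by linarith
  have h₂ : β + (1 - α) ≠ 0 := by linarith
  have hD : α + (1 - β) + β * (β + (1 - α)) ≠ 0 := by nlinarith
  have hD' : (1 - β) * (1 + α) + β ^ 2 ≠ 0 := by nlinarith
  have hr₀ : 0 ≤ (1 - β) * (1 + α) / ((1 - β) * (1 + α) + β ^ 2) := by positivity
  have hr₁ : (1 - β) * (1 + α) / ((1 - β) * (1 + α) + β ^ 2) ≤ 1 :=
    div_le_one_of_le₀ (by nlinarith) (by positivity)
  have hw₀ : 0 ≤ β / (α + (1 - β) + β * (β + (1 - α))) := by positivity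
  have hw₁ : β / (α + (1 - β) + β * (β + (1 - α))) ≤ 1 :=
    div_le_one_of_le₀ (by nlinarith) (by positivity)
  calc R _ (mix _ _ _ (mix _ _ _ (delta ab) (delta ad)) (mix _ _ _ (delta ba) (delta da))) :=
        hInd.mix_mono hac hca _ _ _
    R _ (mix _ _ _ (mix _ _ _ (mix β _ _ (delta aa) (delta ad)) (delta ad)) _) :=
        hInd.mix_right (hInd.mix_right hab _ _ _ _) _ _ _ _
    -- `(αβ·aa + β(1 - α)·da) / D` is `β / D` times the left-hand side of `hba`
    _ = mix _ hw₀ hw₁ (mix α hα0.le hα1.le (delta aa) (delta da))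
          (mix _ hr₀ hr₁ (delta ad) (delta ba)) :=
        ext <| Finsupp.ext fun o => by
          simp only [mix_val, delta_val, Finsupp.add_apply, Finsupp.smul_apply, smul_eq_mul]
          field_simp
          ring
    R _ (mix _ hw₀ hw₁ (delta ba) (mix _ hr₀ hr₁ (delta ad) (delta ba))) :=
        hInd.mix_right hba _ _ _ _
    _ = _ :=
        ext <| Finsupp.ext fun o => by
          simp only [mix_val, delta_val, Finsupp.add_apply, Finsupp.smul_apply, smul_eq_mul]
          field_simp
          ring

lemma Independence.rel_mix_bd_ba [IsPreorder (Lottery X) R] (hInd : Independence R)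
    (hα0 : 0 < α) (hβ0 : 0 < β) (hβ1 : β < 1) (hαβ : α ≤ β)
    (hbd : R (mix β hβ0.le hβ1.le (delta ba) (delta bd)) (delta bb))
    (hba : R (delta ba) (delta bb)) :
    R (mix ((1 - β) * (1 + α) / (α + (1 - β) + β * (β + (1 - α))))
        (div_nonneg (by nlinarith) (by nlinarith)) (div_le_one_of_le₀ (by nlinarith) (by nlinarith))
        (delta bd) (delta ba)) (delta bb) := by
  have hD : α + (1 - β) + β * (β + (1 - α)) ≠ 0 := by nlinarith
  have hw₀ : 0 ≤ (1 + α) / (α + (1 - β) + β * (β + (1 - α))) :=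
    div_nonneg (by linarith) (by nlinarith)
  have hw₁ : (1 + α) / (α + (1 - β) + β * (β + (1 - α))) ≤ 1 :=
    div_le_one_of_le₀ (by nlinarith) (by nlinarith)
  convert hInd.mix_rel_of_rel hbd hba _ hw₀ hw₁ using 1
  exact ext <| Finsupp.ext fun o => by
    simp only [mix_val, delta_val, Finsupp.add_apply, Finsupp.smul_apply, smul_eq_mul]
    field_simp
    ring

theorem Independence.not_negDominance_of_chain [IsPreorder (Lottery X) R] (hInd : Independence R)
    (hα0 : 0 < α) (hα1 : α < 1) (hβ0 : 0 < β) (hβ1 : β < 1) (hαβ : α ≤ β)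
    (hac : R (delta ac) (mix (α / (α + (1 - β))) (div_nonneg hα0.le (by linarith))
      (by rw [div_le_one (by linarith)]; linarith) (delta ab) (delta ad)))
    (hca : R (delta ca) (mix (β / (β + (1 - α))) (div_nonneg hβ0.le (by linarith))
      (by rw [div_le_one (by linarith)]; linarith) (delta ba) (delta da)))
    (hab : R (delta ab) (mix β hβ0.le hβ1.le (delta aa) (delta ad)))
    (hba : R (mix α hα0.le hα1.le (delta aa) (delta da)) (delta ba))
    (had : R (delta ad) (delta bd))
    (hbd : R (mix β hβ0.le hβ1.le (delta ba) (delta bd)) (delta bb))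
    (hba_bb : R (delta ba) (delta bb))
    (hac_bb : ¬ R (delta ac) (delta bb)) (hca_bb : ¬ R (delta ca) (delta bb))
    (hbd_ad : ¬ R (delta bd) (delta ad)) :
    ¬ NegDominance R := by
  intro hND
  have hm₀ : 0 < (1 - β) * (1 + α) / (α + (1 - β) + β * (β + (1 - α))) := by
    apply div_pos <;> nlinarith
  have hm₁ : (1 - β) * (1 + α) / (α + (1 - β) + β * (β + (1 - α))) < 1 := by
    rw [div_lt_one (by nlinarith)]; nlinarith
  have hX := sPref_of_rel_of_sPref_of_rel (hInd.rel_mix_ac_ca hα0 hα1 hβ0 hβ1 hac hca hab hba)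
    (hInd.sPref_mix_right ⟨had, hbd_ad⟩ _ hm₀ hm₁ (delta ba))
    (hInd.rel_mix_bd_ba hα0 hβ0 hβ1 hαβ hbd hba_bb)
  rcases hND.sPref_delta_of_sPref_mix hX with h | h
  exacts [hac_bb h.1, hca_bb h.1]

end Chain

end Lottery

section Embed

variable {O₁ O₂ : Type*}

@[simp] lemma embed1_delta (x : O₁) (y : O₂) : embed1 (delta x) y = delta (x, y) :=
  Lottery.ext <| Finsupp.embDomain_single _ _ _

@[simp] lemma embed2_delta (y : O₂) (x : O₁) : embed2 (delta y) x = delta (x, y) :=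
  Lottery.ext <| Finsupp.embDomain_single _ _ _

@[simp] lemma embed1_mix (μ : ℝ) (h0 : 0 ≤ μ) (h1 : μ ≤ 1) (f g : Lottery O₁) (y : O₂) :
    embed1 (mix μ h0 h1 f g) y = mix μ h0 h1 (embed1 f y) (embed1 g y) :=
  Lottery.ext <| by
    simp only [embed1, Lottery.mix_val, Finsupp.embDomain_eq_mapDomain, Finsupp.mapDomain_add,
      Finsupp.mapDomain_smul]

@[simp] lemma embed2_mix (μ : ℝ) (h0 : 0 ≤ μ) (h1 : μ ≤ 1) (f g : Lottery O₂) (x : O₁) :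
    embed2 (mix μ h0 h1 f g) x = mix μ h0 h1 (embed2 f x) (embed2 g x) :=
  Lottery.ext <| by
    simp only [embed2, Lottery.mix_val, Finsupp.embDomain_eq_mapDomain, Finsupp.mapDomain_add,
      Finsupp.mapDomain_smul]

variable {R1 : Lottery O₁ → Lottery O₁ → Prop} {R2 : Lottery O₂ → Lottery O₂ → Prop}
  {R : Lottery (O₁ × O₂) → Lottery (O₁ × O₂) → Prop}

lemma UnidimDimSep.rel_embed1 (hSep : UnidimDimSep R1 R2 R) {f g : Lottery O₁} (h : R1 f g)
    (y : O₂) : R (embed1 f y) (embed1 g y) :=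
  (hSep.1 f g).1 h y

lemma UnidimDimSep.rel_embed2 (hSep : UnidimDimSep R1 R2 R) {f g : Lottery O₂} (h : R2 f g)
    (x : O₁) : R (embed2 f x) (embed2 g x) :=
  (hSep.2 f g).1 h x

end Embed

/-- qualitative inconsistency of Pareto, Converse Pareto, Independence,
Unidimensional Dimensional Separability, and Negative Dominance, with mixture weights
`α, β ∈ (0,1)`. -/
theorem statement17 {O₁ O₂ : Type*}
    (R1 : Lottery O₁ → Lottery O₁ → Prop) (R2 : Lottery O₂ → Lottery O₂ → Prop)
    (R : Lottery (O₁ × O₂) → Lottery (O₁ × O₂) → Prop)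
    (h1r : Reflexive R1)
    (h2r : Reflexive R2)
    (hr : Reflexive R) (ht : Transitive R)
    (α β : ℝ) (hα0 : 0 < α) (hα1 : α < 1) (hβ0 : 0 < β) (hβ1 : β < 1)
    (hex1 : ∃ a b c d : O₁, SPref R1 (delta a) (delta b) ∧ SPref R1 (delta b) (delta c) ∧
      SPref R1 (delta c) (delta d) ∧
      Indiff R1 (mix α hα0.le hα1.le (delta a) (delta d)) (delta b) ∧
      R1 (delta c) (mix (β / (β + (1 - α)))
        (div_nonneg hβ0.le (by linarith)) (by rw [div_le_one (by linarith)]; linarith)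
        (delta b) (delta d)))
    (hex2 : ∃ a b c d : O₂, SPref R2 (delta a) (delta b) ∧ SPref R2 (delta b) (delta c) ∧
      SPref R2 (delta c) (delta d) ∧
      Indiff R2 (mix β hβ0.le hβ1.le (delta a) (delta d)) (delta b) ∧
      R2 (delta c) (mix (α / (α + (1 - β)))
        (div_nonneg hα0.le (by linarith)) (by rw [div_le_one (by linarith)]; linarith)
        (delta b) (delta d))) :
    ¬ (QPareto R1 R2 R ∧ QConvPareto R1 R2 R ∧ Independence R ∧
        UnidimDimSep R1 R2 R ∧ NegDominance R) := by
  rintro ⟨hQP, hQCP, hInd, hSep, hND⟩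
  obtain ⟨a₁, b₁, c₁, d₁, hab₁, hbc₁, -, hF₁, hG₁⟩ := hex1
  obtain ⟨a₂, b₂, c₂, d₂, hab₂, hbc₂, -, hF₂, hG₂⟩ := hex2
  have : IsPreorder (Lottery (O₁ × O₂)) R := { refl := hr, trans := fun _ _ _ => @ht _ _ _ }
  have hF₁l := fun y => hSep.rel_embed1 hF₁.1 y
  have hF₁r := fun y => hSep.rel_embed1 hF₁.2 y
  have hF₂l := fun x => hSep.rel_embed2 hF₂.1 x
  have hF₂r := fun x => hSep.rel_embed2 hF₂.2 x
  have hG₁' := hSep.rel_embed1 hG₁ a₂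
  have hG₂' := hSep.rel_embed2 hG₂ a₁
  simp only [embed1_mix, embed1_delta, embed2_mix, embed2_delta] at hF₁l hF₁r hF₂l hF₂r hG₁' hG₂'
  rcases le_total α β with hαβ | hβα
  · exact hInd.not_negDominance_of_chain hα0 hα1 hβ0 hβ1 hαβ hG₂' hG₁' (hF₂r a₁) (hF₁l a₂)
      (hQP a₁ b₁ d₂ d₂ hab₁.1 (h2r _)) (hF₂l b₁) (hQP b₁ b₁ a₂ b₂ (h1r _) hab₂.1)
      (fun h => hbc₂.2 (hQCP _ _ _ _ h).2) (fun h => hbc₁.2 (hQCP _ _ _ _ h).1)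
      (fun h => hab₁.2 (hQCP _ _ _ _ h).1) hND
  · exact hInd.not_negDominance_of_chain hβ0 hβ1 hα0 hα1 hβα hG₁' hG₂' (hF₁r a₂) (hF₂l a₁)
      (hQP d₁ d₁ a₂ b₂ (h1r _) hab₂.1) (hF₁l b₂) (hQP a₁ b₁ b₂ b₂ hab₁.1 (h2r _))
      (fun h => hbc₁.2 (hQCP _ _ _ _ h).1) (fun h => hbc₂.2 (hQCP _ _ _ _ h).2)
      (fun h => hab₂.2 (hQCP _ _ _ _ h).2) hND
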